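/- If a hypergram (V,H,G) admits an n-qubit Pauli assignment for some n, then the product over 𝔽₂ of its context matrix by its anticommutation matrix is the zero matrix; equivalently, for every hyperedge h ∈ H and every vertex j ∈ V, the number of vertices i ∈ h with {i,j} ∈ G is even. -/

import Mathlib

open scoped Classical
open Matrix

noncomputable section

/-- The space of `n`-qubit operators, realized as matrices indexed by
`Fin n → Fin 2` (the `n`-fold tensor-product index). -/
abbrev QMat (n : ℕ) := Matrix (Fin n → Fin 2) (Fin n → Fin 2) ℂ

/-- The four Pauli matrices `I, X, Y, Z`. -/
def pauliMat : Fin 4 → Matrix (Fin 2) (Fin 2) ℂ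
  | ⟨0, _⟩ => 1
  | ⟨1, _⟩ => !![0, 1; 1, 0]
  | ⟨2, _⟩ => !![0, -Complex.I; Complex.I, 0]
  | ⟨3, _⟩ => !![1, 0; 0, -1]

/-- The `n`-fold Kronecker (tensor) product `G₁ ⊗ ⋯ ⊗ Gₙ` of the Pauli matrices
selected by `g : Fin n → Fin 4`, as a matrix indexed by `Fin n → Fin 2`. -/
def nPauli {n : ℕ} (g : Fin n → Fin 4) : QMat n :=
  Matrix.of fun r c => ∏ k, pauliMat (g k) (r k) (c k)

/-- `M` is an `n`-qubit Pauli observable. -/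
def IsPauliObs (n : ℕ) (M : QMat n) : Prop := ∃ g : Fin n → Fin 4, M = nPauli g

/-- `I^⊗n`, the `n`-fold tensor product of the identity. -/
def idN (n : ℕ) : QMat n := nPauli (fun _ => ⟨0, by omega⟩)

/-- Product of `f` over a finite set of naturals, taken in increasing order
(well-defined without commutativity; agrees with the unordered product when the
factors pairwise commute). -/
def natFinsetProd {M : Type*} [Monoid M] (s : Finset ℕ) (f : ℕ → M) : M :=
  ((s.sort (· ≤ ·)).map f).prod

/-- `(V,H,G)` is a hypergram: `V` a nonempty finite vertex set, `H` a set of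
nonempty hyperedges covering `V`, `G` a set of 2-element edges on `V` forming a
simple reduced graph, no edge of `G` being contained in a hyperedge of `H`. -/
def IsHypergram (V : Finset ℕ) (H G : Finset (Finset ℕ)) : Prop :=
  V.Nonempty ∧
  (∀ h ∈ H, h ⊆ V ∧ h.Nonempty) ∧
  (∀ v ∈ V, ∃ h ∈ H, v ∈ h) ∧
  (∀ e ∈ G, e ⊆ V ∧ e.card = 2) ∧
  (∀ v ∈ V, ∃ e ∈ G, v ∈ e) ∧
  (∀ v ∈ V, ∀ w ∈ V,
    (∀ u ∈ V, (({v, u} : Finset ℕ) ∈ G ↔ ({w, u} : Finset ℕ) ∈ G)) → v = w) ∧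
  (∀ e ∈ G, ∀ h ∈ H, ¬ e ⊆ h)

/-- `α` is an `n`-qubit Pauli assignment of the hypergram `(V,H,G)`. -/
def IsPauliAssignment (V : Finset ℕ) (H G : Finset (Finset ℕ)) (n : ℕ)
    (α : ℕ → QMat n) : Prop :=
  (∀ v ∈ V, IsPauliObs n (α v)) ∧
  (∀ v ∈ V, α v ≠ idN n) ∧
  (∀ v₁ ∈ V, ∀ v₂ ∈ V, α v₁ = α v₂ → v₁ = v₂) ∧
  (∀ v₁ ∈ V, ∀ v₂ ∈ V, v₁ ≠ v₂ →
    (α v₁ * α v₂ = -(α v₂ * α v₁) ↔ ({v₁, v₂} : Finset ℕ) ∈ G)) ∧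
  (∀ h ∈ H, natFinsetProd h α = idN n ∨ natFinsetProd h α = -(idN n))

/-- The sign `sgn_α(h) ∈ {−1,1}` of a hyperedge `h`: `∏_{v∈h} α(v) = sgn_α(h)·I^⊗n`. -/
def quantumSgn {n : ℕ} (α : ℕ → QMat n) (h : Finset ℕ) : ℤ :=
  if natFinsetProd h α = idN n then 1 else -1

/-- The sign `sgn_a(h) = ∏_{v∈h} a(v)` of a hyperedge for a classical assignment. -/
def classicalSgn (a : ℕ → ℤ) (h : Finset ℕ) : ℤ := ∏ v ∈ h, a v

/-- The contextuality degree of a Pauli assignment: the minimum over classical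
assignments `a : V → {−1,1}` of the number of hyperedges whose signs differ. -/
def contextualityDegree {n : ℕ} (H : Finset (Finset ℕ)) (α : ℕ → QMat n) : ℕ :=
  sInf { d : ℕ | ∃ a : ℕ → ℤ, (∀ v, a v = 1 ∨ a v = -1) ∧
    d = (H.filter (fun h => quantumSgn α h ≠ classicalSgn a h)).card }

/-- The context (incidence) matrix of a hypergram over 𝔽₂. -/
def contextMatrix (V : Finset ℕ) (H : Finset (Finset ℕ)) :
    Matrix {h // h ∈ H} {v // v ∈ V} (ZMod 2) :=
  Matrix.of fun h v => if v.1 ∈ h.1 then 1 else 0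

/-- The anticommutation (adjacency) matrix of a hypergram over 𝔽₂. -/
def anticommMatrix (V : Finset ℕ) (G : Finset (Finset ℕ)) :
    Matrix {v // v ∈ V} {v // v ∈ V} (ZMod 2) :=
  Matrix.of fun i j => if ({i.1, j.1} : Finset ℕ) ∈ G then 1 else 0

/-- The standard symplectic form on `𝔽₂^{2n}`:
`⟨x,y⟩ = Σ_{k=1}^{n} (x_{2k−1} y_{2k} + x_{2k} y_{2k−1})`. -/
def sympForm (n : ℕ) (x y : Fin (2 * n) → ZMod 2) : ZMod 2 :=
  ∑ k : Fin n,
    (x ⟨2 * k.1, by have := k.2; omega⟩ * y ⟨2 * k.1 + 1, by have := k.2; omega⟩ +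
     x ⟨2 * k.1 + 1, by have := k.2; omega⟩ * y ⟨2 * k.1, by have := k.2; omega⟩)

/-- The single-qubit encoding `ψ(I)=(0,0), ψ(X)=(0,1), ψ(Y)=(1,1), ψ(Z)=(1,0)`. -/
def psi4 : Fin 4 → (ZMod 2) × (ZMod 2)
  | ⟨0, _⟩ => (0, 0)
  | ⟨1, _⟩ => (0, 1)
  | ⟨2, _⟩ => (1, 1)
  | ⟨3, _⟩ => (1, 0)

/-- The encoding `ψ` of an `n`-qubit Pauli observable (given by its tensor
factors `g`) as a vector of `𝔽₂^{2n}`, concatenating the per-factor encodings. -/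
def psiVec {n : ℕ} (g : Fin n → Fin 4) : Fin (2 * n) → ZMod 2 := fun idx =>
  if idx.1 % 2 = 0 then (psi4 (g ⟨idx.1 / 2, by have := idx.2; omega⟩)).1
  else (psi4 (g ⟨idx.1 / 2, by have := idx.2; omega⟩)).2

/-- All pairs of elements of `S` commute. -/
def PairComm {n : ℕ} (S : Finset (QMat n)) : Prop := ∀ a ∈ S, ∀ b ∈ S, a * b = b * a

/-- The (well-defined) product of a finite set of pairwise commuting matrices. -/
def commProd {n : ℕ} (S : Finset (QMat n)) (h : PairComm S) : QMat n :=
  S.noncommProd id (fun a ha b hb _ => h a ha b hb)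

/-- Pairwise commutation is inherited by subsets. -/
def pairCommOfSubset {n : ℕ} {S T : Finset (QMat n)} (hST : S ⊆ T) (h : PairComm T) :
    PairComm S := fun a ha b hb => h a (hST ha) b (hST hb)

/-- `Q` (pairwise commuting) is independent: no nonempty subset has product `±I^⊗n`. -/
def IsIndep {n : ℕ} (Q : Finset (QMat n)) (hQ : PairComm Q) : Prop :=
  ∀ S : Finset (QMat n), ∀ (hS : S ⊆ Q), S.Nonempty →
    commProd S (pairCommOfSubset hS hQ) ≠ idN n ∧
    commProd S (pairCommOfSubset hS hQ) ≠ -(idN n)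

/-- The vertex set `{1, …, 15}`. -/
def V15 : Finset ℕ := Finset.Icc 1 15

/-- The 15 lines of the doily. -/
def doilyLines : Finset (Finset ℕ) :=
  { {1,2,3}, {1,8,9}, {1,10,11}, {2,4,6}, {2,5,7}, {3,12,15}, {3,13,14},
    {4,8,12}, {4,10,14}, {5,8,13}, {5,10,15}, {6,9,15}, {6,11,13},
    {7,9,14}, {7,11,12} }

/-- The 10 lines of the two-spread `H_{2s}`. -/
def twoSpreadLines : Finset (Finset ℕ) :=
  { {1,2,3}, {1,10,11}, {2,4,6}, {3,13,14}, {4,8,12}, {5,8,13}, {5,10,15},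
    {6,9,15}, {7,9,14}, {7,11,12} }

/-- The anticommutation graph `G_d = G_{2s}`: pairs of distinct vertices not on a
common doily line. -/
def doilyG : Finset (Finset ℕ) :=
  (V15.powersetCard 2).filter (fun e => ∀ h ∈ doilyLines, ¬ e ⊆ h)

/-!
Every Pauli observable squares to the identity, and two Pauli observables either commute or
anticommute. Fix a hyperedge `h` and a vertex `j`: moving `α j` across `∏_{v ∈ h} α v` produces
one sign `-1` for each `G`-neighbour of `j` in `h`. The product is `±I`, so it commutes with the
nonzero `α j`, and the number of such neighbours is even. Read modulo 2, that number is the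
`(h, j)` entry of the context matrix times the anticommutation matrix.
-/

theorem pauliMat_mul_self (a : Fin 4) : pauliMat a * pauliMat a = 1 := by
  fin_cases a <;> simp [pauliMat, Matrix.one_fin_two]

theorem pauliMat_commute_or_anticommute (a b : Fin 4) :
    pauliMat a * pauliMat b = pauliMat b * pauliMat a ∨
      pauliMat a * pauliMat b = -(pauliMat b * pauliMat a) := by
  fin_cases a <;> fin_cases b <;> simp [pauliMat, Matrix.one_fin_two]

theorem nPauli_mul_nPauli {n : ℕ} (g g' : Fin n → Fin 4) :
    nPauli g * nPauli g' =
      Matrix.of fun r c => ∏ k, (pauliMat (g k) * pauliMat (g' k)) (r k) (c k) := by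
  ext r c
  simp only [Matrix.mul_apply, nPauli, Matrix.of_apply, ← Finset.prod_mul_distrib]
  rw [Finset.prod_univ_sum, Fintype.piFinset_univ]

theorem idN_eq_one (n : ℕ) : idN n = 1 := by
  ext r c
  simp [idN, nPauli, pauliMat, Matrix.one_apply, Finset.prod_boole, funext_iff]

theorem nPauli_mul_self {n : ℕ} (g : Fin n → Fin 4) : nPauli g * nPauli g = 1 := by
  rw [nPauli_mul_nPauli, ← idN_eq_one]
  ext r c
  simp only [Matrix.of_apply, idN, nPauli, pauliMat_mul_self]
  rfl

theorem nPauli_ne_zero {n : ℕ} (g : Fin n → Fin 4) : nPauli g ≠ 0 := fun h =>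
  one_ne_zero (by rw [← nPauli_mul_self g, h, zero_mul] : (1 : QMat n) = 0)

theorem nPauli_mul_nPauli_eq_neg_one_pow_smul {n : ℕ} (g g' : Fin n → Fin 4) :
    nPauli g * nPauli g' =
      (-1 : ℂ) ^ (Finset.univ.filter fun k =>
        pauliMat (g k) * pauliMat (g' k) ≠ pauliMat (g' k) * pauliMat (g k)).card •
        (nPauli g' * nPauli g) := by
  set anti : Finset (Fin n) := Finset.univ.filter fun k =>
    pauliMat (g k) * pauliMat (g' k) ≠ pauliMat (g' k) * pauliMat (g k)
  have hsign : (-1 : ℂ) ^ anti.card = ∏ k, if k ∈ anti then -1 else 1 := by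
    rw [Finset.prod_ite_mem, Finset.univ_inter, Finset.prod_const]
  rw [hsign]
  ext r c
  simp only [nPauli_mul_nPauli, Matrix.smul_apply, Matrix.of_apply, smul_eq_mul,
    ← Finset.prod_mul_distrib]
  refine Finset.prod_congr rfl fun k _ => ?_
  split_ifs with hk <;>
    simp only [anti, Finset.mem_filter, Finset.mem_univ, true_and, not_not] at hk
  · rcases pauliMat_commute_or_anticommute (g k) (g' k) with h | h
    · exact absurd h hk
    · simp [h]
  · simp [hk]

theorem nPauli_commute_or_anticommute {n : ℕ} (g g' : Fin n → Fin 4) :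
    nPauli g * nPauli g' = nPauli g' * nPauli g ∨
      nPauli g * nPauli g' = -(nPauli g' * nPauli g) := by
  rw [nPauli_mul_nPauli_eq_neg_one_pow_smul]
  rcases neg_one_pow_eq_or ℂ _ with h | h <;> rw [h]
  · exact Or.inl (one_smul ℂ _)
  · exact Or.inr (neg_one_smul ℂ _)

theorem List.prod_map_mul_eq_smul_mul {ι S R : Type*} [Monoid R] [CommMonoid S] [MulAction S R]
    [IsScalarTower S R R] [SMulCommClass S R R] (M : R) (f : ι → R) (c : ι → S) :
    ∀ l : List ι, (∀ i ∈ l, f i * M = c i • (M * f i)) →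
      (l.map f).prod * M = (l.map c).prod • (M * (l.map f).prod)
  | [], _ => by simp
  | i :: l, hl => by
    have ih := List.prod_map_mul_eq_smul_mul M f c l fun k hk => hl k (List.mem_cons_of_mem _ hk)
    calc f i * (l.map f).prod * M = f i * ((l.map c).prod • (M * (l.map f).prod)) := by
          rw [mul_assoc, ih]
      _ = (l.map c).prod • (f i * M * (l.map f).prod) := by rw [mul_smul_comm, mul_assoc]
      _ = (c i * (l.map c).prod) • (M * (f i * (l.map f).prod)) := by
          rw [hl i List.mem_cons_self, smul_mul_assoc, smul_smul, mul_comm, mul_assoc]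
      _ = _ := by simp only [List.map_cons, List.prod_cons]

theorem natFinsetProd_mul_eq_smul_mul {S R : Type*} [Monoid R] [CommMonoid S] [MulAction S R]
    [IsScalarTower S R R] [SMulCommClass S R R] (s : Finset ℕ) (M : R) (f : ℕ → R) (c : ℕ → S)
    (hc : ∀ i ∈ s, f i * M = c i • (M * f i)) :
    natFinsetProd s f * M = (∏ i ∈ s, c i) • (M * natFinsetProd s f) := by
  have hsort : ((s.sort (· ≤ ·)).map c).prod = ∏ i ∈ s, c i := by
    rw [← Finset.prod_map_val, ← Finset.sort_eq s (· ≤ ·), Multiset.map_coe, Multiset.prod_coe]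
  rw [← hsort]
  exact List.prod_map_mul_eq_smul_mul M f c _ fun i hi => hc i ((Finset.mem_sort _).mp hi)

theorem eq_one_of_mul_eq_smul_mul {K R : Type*} [Ring K] [IsCancelMulZero K] [Ring R] [Module K R]
    [Module.IsTorsionFree K R] {P M : R} {c : K}
    (hP : P = 1 ∨ P = -1) (hM : M ≠ 0) (h : P * M = c • (M * P)) : c = 1 := by
  have hMc : M = c • M := by rcases hP with rfl | rfl <;> simpa using h
  exact smul_left_injective K hM (by simpa using hMc.symm)

theorem IsHypergram.singleton_notMem {V : Finset ℕ} {H G : Finset (Finset ℕ)}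
    (hgram : IsHypergram V H G) (v : ℕ) : ({v} : Finset ℕ) ∉ G := fun hv => by
  simpa using (hgram.2.2.2.1 _ hv).2

namespace IsPauliAssignment

variable {V : Finset ℕ} {H G : Finset (Finset ℕ)} {n : ℕ} {α : ℕ → QMat n}

theorem mul_eq_sign_smul_mul (hα : IsPauliAssignment V H G n α) (hgram : IsHypergram V H G)
    {v j : ℕ} (hv : v ∈ V) (hj : j ∈ V) :
    α v * α j = (if ({v, j} : Finset ℕ) ∈ G then -1 else 1 : ℂ) • (α j * α v) := by
  by_cases hvj : v = j
  · subst hvj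
    simp [hgram.singleton_notMem v]
  split_ifs with hedge
  · simpa using (hα.2.2.2.1 v hv j hj hvj).mpr hedge
  · obtain ⟨gv, hgv⟩ := hα.1 v hv
    obtain ⟨gj, hgj⟩ := hα.1 j hj
    rw [one_smul, hgv, hgj]
    refine (nPauli_commute_or_anticommute gv gj).resolve_right fun hanti => hedge ?_
    exact (hα.2.2.2.1 v hv j hj hvj).mp (by rwa [← hgv, ← hgj] at hanti)

theorem even_card_filter_adj (hα : IsPauliAssignment V H G n α) (hgram : IsHypergram V H G)
    {h : Finset ℕ} (hh : h ∈ H) {j : ℕ} (hj : j ∈ V) :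
    Even (h.filter fun i => ({i, j} : Finset ℕ) ∈ G).card := by
  obtain ⟨gj, hgj⟩ := hα.1 j hj
  have hcomm := natFinsetProd_mul_eq_smul_mul h (α j) α _
    fun v hv => hα.mul_eq_sign_smul_mul hgram ((hgram.2.1 h hh).1 hv) hj
  have hsign := eq_one_of_mul_eq_smul_mul (by simpa [idN_eq_one] using hα.2.2.2.2 h hh)
    (hgj ▸ nPauli_ne_zero gj) hcomm
  rw [Finset.prod_ite, Finset.prod_const, Finset.prod_const, one_pow, mul_one] at hsign
  exact (neg_one_pow_eq_one_iff_even (by norm_num)).mp hsign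

end IsPauliAssignment

theorem contextMatrix_mul_anticommMatrix_apply {V : Finset ℕ} {H G : Finset (Finset ℕ)}
    (hH : ∀ h ∈ H, h ⊆ V) (h : {h // h ∈ H}) (j : {v // v ∈ V}) :
    (contextMatrix V H * anticommMatrix V G) h j =
      (h.1.filter fun i => ({i, j.1} : Finset ℕ) ∈ G).card := by
  have hfilter : (V.filter fun v => v ∈ h.1 ∧ ({v, j.1} : Finset ℕ) ∈ G) =
      h.1.filter fun i => ({i, j.1} : Finset ℕ) ∈ G := by
    rw [← Finset.filter_filter, Finset.filter_mem_eq_inter, Finset.inter_eq_right.mpr (hH _ h.2)]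
  simp only [Matrix.mul_apply, contextMatrix, anticommMatrix, Matrix.of_apply, ite_mul,
    one_mul, zero_mul, ← ite_and]
  rw [Finset.sum_coe_sort V fun v =>
      if v ∈ h.1 ∧ ({v, j.1} : Finset ℕ) ∈ G then (1 : ZMod 2) else 0,
    Finset.sum_boole, hfilter]

/-- If a hypergram admits a Pauli assignment then its context matrix
times its anticommutation matrix is zero over 𝔽₂; equivalently, every vertex has
an even number of `G`-neighbours in every hyperedge. -/
theorem assignable_implies_matrix_condition
    (V : Finset ℕ) (H G : Finset (Finset ℕ)) (hgram : IsHypergram V H G)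
    (hassign : ∃ n, ∃ α : ℕ → QMat n, IsPauliAssignment V H G n α) :
    contextMatrix V H * anticommMatrix V G = 0 ∧
    ∀ h ∈ H, ∀ j ∈ V,
      Even ((h.filter (fun i => ({i, j} : Finset ℕ) ∈ G)).card) := by
  obtain ⟨n, α, hα⟩ := hassign
  have heven : ∀ h ∈ H, ∀ j ∈ V, Even (h.filter fun i => ({i, j} : Finset ℕ) ∈ G).card :=
    fun h hh j hj => hα.even_card_filter_adj hgram hh hj
  refine ⟨?_, heven⟩
  ext h j
  rw [contextMatrix_mul_anticommMatrix_apply (fun h hh => (hgram.2.1 h hh).1), Matrix.zero_apply,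
    ZMod.natCast_eq_zero_iff_even]
  exact heven h.1 h.2 j.1 j.2
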